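/- Let 0 ≤ q ≤ p ≤ 1 and c ≥ 0. If kl(q,p) ≤ c, then p ≤ ( √(q + c/2) + √(c/2) )². -/

import Mathlib

open MeasureTheory ENNReal

/-- Binary Kullback–Leibler divergence `kl(q,p)` for `q, p ∈ [0,1]`, with the conventions
`0 · ln 0 = 0` and `kl(q,p) = ∞` when `p ∈ {0,1}` and `q ≠ p`. -/
noncomputable def klBin (q p : ℝ) : ℝ≥0∞ :=
  if (p = 0 ∨ p = 1) ∧ q ≠ p then ∞
  else ENNReal.ofReal (q * Real.log (q / p) + (1 - q) * Real.log ((1 - q) / (1 - p)))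

/-!
Write `kl(q,p) = q log(q/p) + (1-q) log((1-q)/(1-p))`. Since `q/p ≤ 1`, the bound
`log x ≥ sinh (log x) = (x - x⁻¹)/2` for `x ≤ 1` gives `q log(q/p) ≥ (q² - p²)/(2p)`, and
`log y ≥ 1 - y⁻¹` gives `(1-q) log((1-q)/(1-p)) ≥ p - q`; the two add up to the refined Pinsker
inequality `kl(q,p) ≥ (p-q)²/(2p)`. Hence `p - q ≤ √(2cp)`, a quadratic inequality in `√p` whose
larger root is `√(q + c/2) + √(c/2)`.
-/

namespace Real

lemma sub_inv_div_two_le_log {x : ℝ} (hx0 : 0 < x) (hx1 : x ≤ 1) : (x - x⁻¹) / 2 ≤ log x := by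
  rw [← sinh_log hx0]
  exact sinh_le_self_iff.mpr (log_nonpos hx0.le hx1)

lemma sub_le_mul_log_div {a b : ℝ} (ha : 0 ≤ a) (hb : 0 < b) : a - b ≤ a * log (a / b) := by
  rcases ha.eq_or_lt with rfl | ha
  · simpa using hb.le
  · calc a - b = a * (1 - (a / b)⁻¹) := by field_simp
      _ ≤ a * log (a / b) := by gcongr; exact one_sub_inv_le_log_of_pos (by positivity)

lemma sq_sub_sq_div_le_mul_log_div {a b : ℝ} (ha : 0 ≤ a) (hab : a ≤ b) (hb : 0 < b) :
    (a ^ 2 - b ^ 2) / (2 * b) ≤ a * log (a / b) := by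
  rcases ha.eq_or_lt with rfl | ha
  · simp only [zero_mul]
    apply div_nonpos_of_nonpos_of_nonneg <;> nlinarith
  · calc (a ^ 2 - b ^ 2) / (2 * b) = a * ((a / b - (a / b)⁻¹) / 2) := by field_simp
      _ ≤ a * log (a / b) := by
        gcongr
        exact sub_inv_div_two_le_log (by positivity) ((div_le_one hb).mpr hab)

end Real

lemma sq_sub_div_le_kl {q p : ℝ} (hq : 0 ≤ q) (hqp : q ≤ p) (hp0 : 0 < p) (hp1 : p < 1) :
    (p - q) ^ 2 / (2 * p) ≤ q * Real.log (q / p) + (1 - q) * Real.log ((1 - q) / (1 - p)) := by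
  have h₁ := Real.sq_sub_sq_div_le_mul_log_div hq hqp hp0
  have h₂ := Real.sub_le_mul_log_div (a := 1 - q) (b := 1 - p) (by linarith) (by linarith)
  calc (p - q) ^ 2 / (2 * p) = (q ^ 2 - p ^ 2) / (2 * p) + ((1 - q) - (1 - p)) := by
        field_simp; ring
    _ ≤ _ := add_le_add h₁ h₂

lemma klBin_of_mem_Ioo {q p : ℝ} (hp0 : 0 < p) (hp1 : p < 1) :
    klBin q p = ENNReal.ofReal (q * Real.log (q / p) + (1 - q) * Real.log ((1 - q) / (1 - p))) :=
  if_neg fun ⟨hp, _⟩ => hp.elim hp0.ne' hp1.ne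

lemma klBin_one_of_ne {q : ℝ} (hq : q ≠ 1) : klBin q 1 = ∞ :=
  if_pos ⟨Or.inr rfl, hq⟩

lemma sq_sub_le_of_klBin_le {q p c : ℝ} (hq : 0 ≤ q) (hqp : q ≤ p) (hp : p ≤ 1) (hc : 0 ≤ c)
    (hkl : klBin q p ≤ ENNReal.ofReal c) : (p - q) ^ 2 ≤ 2 * p * c := by
  rcases hqp.eq_or_lt with rfl | hqp
  · rw [sub_self, zero_pow two_ne_zero]
    positivity
  have hp0 : 0 < p := hq.trans_lt hqp
  rcases hp.eq_or_lt with rfl | hp1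
  · simp [klBin_one_of_ne hqp.ne] at hkl
  rw [klBin_of_mem_Ioo hp0 hp1, ENNReal.ofReal_le_ofReal_iff hc] at hkl
  have := (sq_sub_div_le_kl hq hqp.le hp0 hp1).trans hkl
  rwa [div_le_iff₀ (by positivity), mul_comm c] at this

lemma le_sq_sqrt_add_sqrt_of_sq_sub_le {q p c : ℝ} (hq : 0 ≤ q) (hp : 0 ≤ p) (hc : 0 ≤ c)
    (h : (p - q) ^ 2 ≤ 2 * p * c) : p ≤ (Real.sqrt (q + c / 2) + Real.sqrt (c / 2)) ^ 2 := by
  set s := Real.sqrt p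
  set a := Real.sqrt (c / 2)
  set b := Real.sqrt (q + c / 2)
  have hs : s ^ 2 = p := Real.sq_sqrt hp
  have ha : a ^ 2 = c / 2 := Real.sq_sqrt (by positivity)
  have hb : b ^ 2 = q + c / 2 := Real.sq_sqrt (by positivity)
  have h_lin : p - q ≤ 2 * a * s := by
    refine (abs_le_of_sq_le_sq' ?_ (by positivity)).2
    calc (p - q) ^ 2 ≤ 2 * p * c := h
      _ = (2 * a * s) ^ 2 := by rw [mul_pow, mul_pow, hs, ha]; ring
  have h_root : s - a ≤ b := by
    refine (abs_le_of_sq_le_sq' ?_ (by positivity)).2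
    calc (s - a) ^ 2 = p - 2 * a * s + c / 2 := by rw [sub_sq, hs, ha]; ring
      _ ≤ b ^ 2 := by rw [hb]; linarith
  calc p = s ^ 2 := hs.symm
    _ ≤ (b + a) ^ 2 := by gcongr; linarith

/-- **Inversion of the refined Pinsker inequality** (quadratic bound step):
if `0 ≤ q ≤ p ≤ 1`, `c ≥ 0` and `kl(q,p) ≤ c`, then `p ≤ (√(q + c/2) + √(c/2))²`. -/
theorem kl_inversion_quadratic (q p c : ℝ) (hq : 0 ≤ q) (hqp : q ≤ p) (hp : p ≤ 1)
    (hc : 0 ≤ c) (hkl : klBin q p ≤ ENNReal.ofReal c) :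
    p ≤ (Real.sqrt (q + c / 2) + Real.sqrt (c / 2)) ^ 2 := by
  have h_pinsker := sq_sub_le_of_klBin_le hq hqp hp hc hkl
  exact le_sq_sqrt_add_sqrt_of_sq_sub_le hq (hq.trans hqp) hc h_pinsker
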